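/- arXiv:1705.00412 — 3 statements merged into one kernel-verified Lean document; each statement's English description precedes it below -/
import Mathlib

section
/- Claim 2 (coefficient identities for Step 1): Define d̂_i := ∑_{S ⊆ {1,…,K}} ĉ(i,S) and ê_i := ∑_{k=1}^{K} ∑_{S ⊆ {1,…,K} : i ∈ S} ĉ(k,S). Then d̂_i = d_i for every i ∈ {1,…,K}, ê_m = d_m (which equals min(d_m, e_m)), and ê_{m'} = e_{m'} for every m' ≠ m. -/
/-!
Passing from `c` to `ĉ` moves the mass `β(k, S)` from each `S ∋ m` to `S \ {m}`. Since
`S ↦ S \ {m}` is a bijection from the sets containing `m` onto those avoiding it, and it preserves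
membership of every `m' ≠ m`, this move leaves `d̂_i` and `ê_{m'}` unchanged, while `ê_m` loses
exactly `∑ β = e_m - d_m`; in `ℕ`, `e_m - (e_m - d_m) = min d_m e_m`.
-/

open Finset

namespace Finset

variable {α M : Type*} [DecidableEq α]

theorem sum_filter_notMem_insert_eq_sum_filter_mem [AddCommMonoid M] (m : α)
    (s : Finset (Finset α)) (hs : ∀ S, m ∉ S → (insert m S ∈ s ↔ S ∈ s)) (g : Finset α → M) :
    ∑ S ∈ s with m ∉ S, g (insert m S) = ∑ S ∈ s with m ∈ S, g S := by
  refine sum_nbij' (insert m) (erase · m) ?_ ?_ ?_ ?_ (fun _ _ => rfl)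
  · simp only [mem_filter, mem_insert_self, and_true]
    exact fun S ⟨hS, hm⟩ => (hs S hm).2 hS
  · simp only [mem_filter, notMem_erase, not_false_eq_true, and_true]
    exact fun S ⟨hS, hm⟩ => (hs _ (notMem_erase m S)).1 (by rwa [insert_erase hm])
  · simp only [mem_filter]
    exact fun S ⟨_, hm⟩ => erase_insert hm
  · simp only [mem_filter]
    exact fun S ⟨_, hm⟩ => insert_erase hm

/-- `f` with the mass `g S` moved from each `S ∋ m` to `S.erase m`. -/
def eraseShift (m : α) (f g : Finset α → ℕ) (S : Finset α) : ℕ :=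
  f S - g S + if m ∉ S then g (insert m S) else 0

variable {m : α} {f g : Finset α → ℕ}

theorem sum_filter_mem_eq_sum_of_eq_zero (hg : ∀ S, m ∉ S → g S = 0) (s : Finset (Finset α)) :
    ∑ S ∈ s with m ∈ S, g S = ∑ S ∈ s, g S :=
  sum_filter_of_ne fun S _ hS => by_contra fun hm => hS (hg S hm)

theorem sum_eraseShift (hgf : ∀ S, g S ≤ f S) (hg : ∀ S, m ∉ S → g S = 0)
    (s : Finset (Finset α)) (hs : ∀ S, m ∉ S → (insert m S ∈ s ↔ S ∈ s)) :
    ∑ S ∈ s, eraseShift m f g S = ∑ S ∈ s, f S := by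
  unfold eraseShift
  rw [sum_add_distrib, sum_tsub_distrib s fun S _ => hgf S, ← sum_filter,
    sum_filter_notMem_insert_eq_sum_filter_mem m s hs, sum_filter_mem_eq_sum_of_eq_zero hg,
    tsub_add_cancel_of_le (sum_le_sum fun S _ => hgf S)]

theorem sum_filter_mem_eraseShift [Fintype α] (hgf : ∀ S, g S ≤ f S)
    (hg : ∀ S, m ∉ S → g S = 0) :
    ∑ S with m ∈ S, eraseShift m f g S = ∑ S with m ∈ S, f S - ∑ S, g S := by
  rw [← sum_filter_mem_eq_sum_of_eq_zero hg, ← sum_tsub_distrib _ fun S _ => hgf S]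
  refine sum_congr rfl fun S hS => ?_
  rw [eraseShift, if_neg (not_not.2 (mem_filter.1 hS).2), add_zero]

theorem sum_le_sum_filter_mem [Fintype α] (hgf : ∀ S, g S ≤ f S)
    (hg : ∀ S, m ∉ S → g S = 0) :
    ∑ S, g S ≤ ∑ S with m ∈ S, f S := by
  rw [← sum_filter_mem_eq_sum_of_eq_zero hg]
  exact sum_le_sum fun S _ => hgf S

end Finset

theorem claim2_coefficient_identities_general
    {K : ℕ} (c : Fin K → Finset (Fin K) → ℕ)
    (d e : Fin K → ℕ)
    (hd : ∀ i, d i = ∑ S : Finset (Fin K), c i S)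
    (he : ∀ i, e i = ∑ k : Fin K,
      ∑ S ∈ Finset.univ.filter (fun S : Finset (Fin K) => i ∈ S), c k S)
    (m : Fin K)
    (β : Fin K → Finset (Fin K) → ℕ)
    (hβle : ∀ i S, β i S ≤ c i S)
    (hβ0 : ∀ i S, ¬(i ≠ m ∧ m ∈ S) → β i S = 0)
    (hβsum : (∑ i : Fin K, ∑ S : Finset (Fin K), β i S) = e m - d m)
    (chat : Fin K → Finset (Fin K) → ℕ)
    (hchat : ∀ i S, chat i S =
      if i = m then c i S
      else if m ∈ S then c i S - β i S
      else c i S + β i (insert m S))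
    (dhat ehat : Fin K → ℕ)
    (hdhat : ∀ i, dhat i = ∑ S : Finset (Fin K), chat i S)
    (hehat : ∀ i, ehat i = ∑ k : Fin K,
      ∑ S ∈ Finset.univ.filter (fun S : Finset (Fin K) => i ∈ S), chat k S) :
    (∀ i, dhat i = d i) ∧ ehat m = min (d m) (e m) ∧
      (∀ m', m' ≠ m → ehat m' = e m') := by
  have hβ_supp : ∀ k S, m ∉ S → β k S = 0 := fun k S hS => hβ0 k S fun h => hS h.2
  have hchat_eq : ∀ k, chat k = eraseShift m (c k) (β k) := by
    intro k
    funext S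
    rcases eq_or_ne k m with rfl | hk
    · simp [hchat, eraseShift, hβ0 k]
    · by_cases hS : m ∈ S
      · simp [hchat, eraseShift, hk, hS]
      · simp [hchat, eraseShift, hk, hS, hβ_supp k S hS]
  refine ⟨fun i => ?_, ?_, fun m' hm' => ?_⟩
  · rw [hdhat, hd, hchat_eq, sum_eraseShift (hβle i) (hβ_supp i) _ (by simp)]
  · calc ehat m = ∑ k, (∑ S with m ∈ S, c k S - ∑ S, β k S) := by
          simp only [hehat, hchat_eq, sum_filter_mem_eraseShift (hβle _) (hβ_supp _)]
      _ = e m - (e m - d m) := by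
          rw [sum_tsub_distrib _ fun k _ => sum_le_sum_filter_mem (hβle k) (hβ_supp k), hβsum, he]
      _ = min (d m) (e m) := by omega
  · rw [hehat, he]
    refine sum_congr rfl fun k _ => ?_
    rw [hchat_eq, sum_eraseShift (hβle k) (hβ_supp k) _ fun S _ => by simp [hm']]

/-- Claim 2, coefficient identities for Step 1. -/
theorem claim2_coefficient_identities
    {K : ℕ} (hK : 2 ≤ K) (c : Fin K → Finset (Fin K) → ℕ)
    (d e : Fin K → ℕ)
    (hd : ∀ i, d i = ∑ S : Finset (Fin K), c i S)
    (he : ∀ i, e i = ∑ k : Fin K,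
      ∑ S ∈ Finset.univ.filter (fun S : Finset (Fin K) => i ∈ S), c k S)
    (m : Fin K) (hm : d m ≤ e m)
    (β : Fin K → Finset (Fin K) → ℕ)
    (hβle : ∀ i S, β i S ≤ c i S)
    (hβ0 : ∀ i S, ¬(i ≠ m ∧ m ∈ S) → β i S = 0)
    (hβsum : (∑ i : Fin K, ∑ S : Finset (Fin K), β i S) = e m - d m)
    (chat : Fin K → Finset (Fin K) → ℕ)
    (hchat : ∀ i S, chat i S =
      if i = m then c i S
      else if m ∈ S then c i S - β i S
      else c i S + β i (insert m S))
    (dhat ehat : Fin K → ℕ)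
    (hdhat : ∀ i, dhat i = ∑ S : Finset (Fin K), chat i S)
    (hehat : ∀ i, ehat i = ∑ k : Fin K,
      ∑ S ∈ Finset.univ.filter (fun S : Finset (Fin K) => i ∈ S), chat k S) :
    (∀ i, dhat i = d i) ∧ ehat m = min (d m) (e m) ∧
      (∀ m', m' ≠ m → ehat m' = e m') :=
  claim2_coefficient_identities_general c d e hd he m β hβle hβ0 hβsum chat hchat dhat ehat hdhat
    hehat
end

section
/- Claim 4 (Step 2 of the achievability proof): Fix m ∈ {1,…,K} and assume d_i ≥ e_i for all i ∈ {1,…,K}. Then there exist functions α and β assigning nonnegative integers to pairs (i,S), with i ∈ {1,…,K} and S ⊆ {1,…,K}, such that: α(i,S) ≤ c(i,S) and β(i,S) ≤ c(i,S) for all (i,S); α(i,S) = 0 unless (i = m and m ∉ S); ∑_{S ⊆ {1,…,K}} α(m,S) = d_m − e_m; β(i,S) = 0 unless (i ≠ m and i ∉ S); and for every m' ≠ m, ∑_{S : m' ∉ S} β(m',S) = ∑_{S : m ∉ S and m' ∈ S} α(m,S). -/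
/-!
Write `e_i = load c i`. Since `∑_{S ∋ m} c(m,S) ≤ e_m`, the target `d_m - e_m` is at most
`∑_{S ∌ m} c(m,S)`, so `α(m,·)` can be cut out of `c(m,·)` on the sets avoiding `m`. For `m' ≠ m`,
the required value `∑_{S ∌ m, S ∋ m'} α(m,S)` is at most `∑_{S ∋ m'} c(m,S)`, and this plus
`∑_{S ∋ m'} c(m',S)` is at most `e_{m'} ≤ d_{m'}`; hence it fits under `∑_{S ∌ m'} c(m',S)` and
`β(m',·)` is cut out of `c(m',·)` in the same way.
-/

open Finset

lemma exists_le_sum_eq_of_le_sum {ι : Type*} [Fintype ι] (f : ι → ℕ) {n : ℕ}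
    (hn : n ≤ ∑ i, f i) : ∃ g ≤ f, ∑ i, g i = n := by
  obtain ⟨g, hgf, hg⟩ := Finsupp.exists_le_degree_eq (Finsupp.equivFunOnFinite.symm f) n
    (by simpa [Finsupp.degree_eq_sum])
  exact ⟨g, fun i => hgf i, by simpa [Finsupp.degree_eq_sum] using hg⟩

lemma exists_le_sum_eq_of_le_sum_filter {ι : Type*} [Fintype ι] (p : ι → Prop) [DecidablePred p]
    (f : ι → ℕ) {n : ℕ} (hn : n ≤ ∑ i with p i, f i) :
    ∃ g ≤ f, (∀ i, ¬p i → g i = 0) ∧ ∑ i, g i = n := by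
  obtain ⟨g, hgf, hg⟩ := exists_le_sum_eq_of_le_sum (fun i => if p i then f i else 0) (n := n)
    (by rwa [← sum_filter])
  refine ⟨g, fun i => (hgf i).trans ?_, fun i hi => by simpa [hi] using hgf i, hg⟩
  dsimp only
  split_ifs <;> simp

section Load

variable {ι : Type*} [Fintype ι] [DecidableEq ι] (c : ι → Finset ι → ℕ)

def load (i : ι) : ℕ := ∑ k, ∑ S with i ∈ S, c k S

lemma sum_sub_load_le_sum_filter_notMem (m : ι) :
    ∑ S, c m S - load c m ≤ ∑ S with m ∉ S, c m S := by
  have hsplit := sum_filter_add_sum_filter_not univ (m ∈ ·) (c m)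
  have hle : ∑ S with m ∈ S, c m S ≤ load c m :=
    single_le_sum (f := fun k => ∑ S with m ∈ S, c k S) (fun _ _ => Nat.zero_le _) (mem_univ m)
  omega

lemma sum_filter_notMem_mem_le_sum_filter_notMem {m m' : ι} (hm' : m' ≠ m) {a : Finset ι → ℕ}
    (ha : a ≤ c m) (hload : load c m' ≤ ∑ S, c m' S) :
    ∑ S with m ∉ S ∧ m' ∈ S, a S ≤ ∑ S with m' ∉ S, c m' S := by
  have hsplit := sum_filter_add_sum_filter_not univ (m' ∈ ·) (c m')
  have ha_le : ∑ S with m ∉ S ∧ m' ∈ S, a S ≤ ∑ S with m' ∈ S, c m S :=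
    (sum_le_sum fun S _ => ha S).trans <|
      sum_le_sum_of_subset fun S => by simp only [mem_filter]; tauto
  have hpair : ∑ S with m' ∈ S, c m S + ∑ S with m' ∈ S, c m' S ≤ load c m' := by
    rw [load, ← sum_pair (f := fun k => ∑ S with m' ∈ S, c k S) hm'.symm]
    exact sum_le_sum_of_subset (subset_univ _)
  omega

end Load

theorem claim4_existence_of_alpha_beta_general
    {K : ℕ} (c : Fin K → Finset (Fin K) → ℕ)
    (d e : Fin K → ℕ)
    (hd : ∀ i, d i = ∑ S : Finset (Fin K), c i S)
    (he : ∀ i, e i = ∑ k : Fin K,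
      ∑ S ∈ Finset.univ.filter (fun S : Finset (Fin K) => i ∈ S), c k S)
    (m : Fin K) (hde : ∀ i, e i ≤ d i) :
    ∃ α β : Fin K → Finset (Fin K) → ℕ,
      (∀ i S, α i S ≤ c i S) ∧ (∀ i S, β i S ≤ c i S) ∧
      (∀ i S, ¬(i = m ∧ m ∉ S) → α i S = 0) ∧
      (∑ S : Finset (Fin K), α m S = d m - e m) ∧
      (∀ i S, ¬(i ≠ m ∧ i ∉ S) → β i S = 0) ∧
      (∀ m', m' ≠ m →
        ∑ S ∈ Finset.univ.filter (fun S : Finset (Fin K) => m' ∉ S), β m' S =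
        ∑ S ∈ Finset.univ.filter (fun S : Finset (Fin K) => m ∉ S ∧ m' ∈ S), α m S) := by
  simp only [hd, he, ← load.eq_1] at hde ⊢
  obtain ⟨a, hac, ha0, hasum⟩ := exists_le_sum_eq_of_le_sum_filter (m ∉ ·) (c m)
    (sum_sub_load_le_sum_filter_notMem c m)
  have hrow : ∀ m' ≠ m, ∃ b ≤ c m', (∀ S, ¬m' ∉ S → b S = 0) ∧
      ∑ S, b S = ∑ S with m ∉ S ∧ m' ∈ S, a S := fun m' hm' =>
    exists_le_sum_eq_of_le_sum_filter (m' ∉ ·) (c m')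
      (sum_filter_notMem_mem_le_sum_filter_notMem c hm' hac (hde m'))
  choose b hbc hb0 hbsum using hrow
  refine ⟨fun i S => if i = m then a S else 0, fun i S => if h : i = m then 0 else b i h S,
    fun i S => ?_, fun i S => ?_, fun i S hiS => ?_, by simpa using hasum, fun i S hiS => ?_,
    fun m' hm' => ?_⟩
  · dsimp only
    split_ifs with h
    · exact h ▸ hac S
    · exact Nat.zero_le _
  · dsimp only
    split_ifs with h
    · exact Nat.zero_le _
    · exact hbc i h S
  · dsimp only
    split_ifs with h
    · exact ha0 S (by tauto)
    · rfl
  · dsimp only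
    split_ifs with h
    · rfl
    · exact hb0 i h S (by tauto)
  · simp only [dif_neg hm', if_true]
    rw [sum_filter_of_ne fun S _ hS => by_contra fun h => hS (hb0 m' hm' S h), hbsum]

/-- Claim 4, Step 2 of the achievability proof. -/
theorem claim4_existence_of_alpha_beta
    {K : ℕ} (hK : 2 ≤ K) (c : Fin K → Finset (Fin K) → ℕ)
    (d e : Fin K → ℕ)
    (hd : ∀ i, d i = ∑ S : Finset (Fin K), c i S)
    (he : ∀ i, e i = ∑ k : Fin K,
      ∑ S ∈ Finset.univ.filter (fun S : Finset (Fin K) => i ∈ S), c k S)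
    (m : Fin K) (hde : ∀ i, e i ≤ d i) :
    ∃ α β : Fin K → Finset (Fin K) → ℕ,
      (∀ i S, α i S ≤ c i S) ∧ (∀ i S, β i S ≤ c i S) ∧
      (∀ i S, ¬(i = m ∧ m ∉ S) → α i S = 0) ∧
      (∑ S : Finset (Fin K), α m S = d m - e m) ∧
      (∀ i S, ¬(i ≠ m ∧ i ∉ S) → β i S = 0) ∧
      (∀ m', m' ≠ m →
        ∑ S ∈ Finset.univ.filter (fun S : Finset (Fin K) => m' ∉ S), β m' S =
        ∑ S ∈ Finset.univ.filter (fun S : Finset (Fin K) => m ∉ S ∧ m' ∈ S), α m S) :=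
  claim4_existence_of_alpha_beta_general c d e hd he m hde
end

section
/- Claim 5 (coefficient identities for Step 2): Define d̂_i := ∑_{S ⊆ {1,…,K}} ĉ(i,S) and ê_i := ∑_{k=1}^{K} ∑_{S ⊆ {1,…,K} : i ∈ S} ĉ(k,S). Then d̂_m = e_m, ê_m = e_m, and for every m' ≠ m one has d̂_{m'} = d_{m'} and ê_{m'} = e_{m'}. -/
/-!
Every row of `ĉ` arises from the corresponding row of `c` by the same move along one coordinate
`k`: the sets `S ∌ k` lose `b S` and the sets `S ∋ k` gain `a (S ∖ {k})`; for `i ≠ m` this is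
`k = i`, `a = b = β i`, for `i = m` it is `k = m`, `a = 0`, `b = α m`. As `S ↦ S ∪ {k}` is a
bijection from the sets avoiding `k` onto those containing `k` that preserves membership of every
other element, the effect of such a move on a row sum, or on a column sum over `{S | i ∈ S}`, is an
explicit difference of sums of `a` and `b`. The coupling condition on `β` makes what row `m` loses
in column `m'` reappear in row `m'`.
-/

open Finset

variable {ι : Type*} [Fintype ι] [DecidableEq ι]

theorem sum_filter_mem_erase_eq_sum_filter_notMem {M : Type*} [AddCommMonoid M] (k : ι)
    (p : Finset ι → Prop) [DecidablePred p] (hp : ∀ S, k ∉ S → (p (insert k S) ↔ p S))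
    (g : Finset ι → M) :
    ∑ S with k ∈ S ∧ p S, g (S.erase k) = ∑ S with k ∉ S ∧ p S, g S := by
  apply sum_nbij' (fun S => S.erase k) (insert k)
  · intro S hS
    simp only [mem_filter, mem_univ, true_and] at hS ⊢
    refine ⟨notMem_erase k S, ?_⟩
    rw [← hp _ (notMem_erase k S), insert_erase hS.1]
    exact hS.2
  · intro S hS
    simp only [mem_filter, mem_univ, true_and] at hS ⊢
    exact ⟨mem_insert_self k S, (hp S hS.1).2 hS.2⟩
  · intro S hS
    simp only [mem_filter, mem_univ, true_and] at hS
    exact insert_erase hS.1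
  · intro S hS
    simp only [mem_filter, mem_univ, true_and] at hS
    exact erase_insert hS.1
  · intro S _
    rfl

def shiftMass (k : ι) (f a b : Finset ι → ℕ) (S : Finset ι) : ℕ :=
  if k ∈ S then f S + a (S.erase k) else f S - b S

theorem sum_filter_mem_shiftMass (k : ι) (f a b : Finset ι → ℕ) :
    ∑ S with k ∈ S, shiftMass k f a b S = ∑ S with k ∈ S, f S + ∑ S with k ∉ S, a S := by
  have h := sum_filter_mem_erase_eq_sum_filter_notMem k (fun _ => True) (fun _ _ => Iff.rfl) a
  simp only [and_true] at h
  rw [← h, ← sum_add_distrib]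
  exact sum_congr rfl fun S hS => if_pos (mem_filter.1 hS).2

section shiftMass

variable (k : ι) {f b : Finset ι → ℕ} (a : Finset ι → ℕ) (hb : ∀ S, b S ≤ f S)
include hb

theorem sum_filter_shiftMass_add (p : Finset ι → Prop) [DecidablePred p]
    (hp : ∀ S, k ∉ S → (p (insert k S) ↔ p S)) :
    ∑ S with p S, shiftMass k f a b S + ∑ S with k ∉ S ∧ p S, b S =
      ∑ S with p S, f S + ∑ S with k ∉ S ∧ p S, a S := by
  have split (g : Finset ι → ℕ) :
      ∑ S with p S, g S = ∑ S with k ∈ S ∧ p S, g S + ∑ S with k ∉ S ∧ p S, g S := by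
    rw [← sum_filter_add_sum_filter_not _ (k ∈ ·), filter_filter, filter_filter]
    simp only [and_comm]
  have on_mem : ∑ S with k ∈ S ∧ p S, shiftMass k f a b S =
      ∑ S with k ∈ S ∧ p S, f S + ∑ S with k ∉ S ∧ p S, a S := by
    rw [← sum_filter_mem_erase_eq_sum_filter_notMem k p hp, ← sum_add_distrib]
    exact sum_congr rfl fun S hS => if_pos (mem_filter.1 hS).2.1
  have on_notMem : ∑ S with k ∉ S ∧ p S, shiftMass k f a b S + ∑ S with k ∉ S ∧ p S, b S =
      ∑ S with k ∉ S ∧ p S, f S := by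
    rw [← sum_add_distrib]
    refine sum_congr rfl fun S hS => ?_
    rw [shiftMass, if_neg (mem_filter.1 hS).2.1, tsub_add_cancel_of_le (hb S)]
  rw [split, split f, add_assoc, on_notMem, on_mem]
  ring

theorem sum_shiftMass_add :
    ∑ S, shiftMass k f a b S + ∑ S with k ∉ S, b S = ∑ S, f S + ∑ S with k ∉ S, a S := by
  simpa using sum_filter_shiftMass_add k a hb (fun _ => True) (fun _ _ => Iff.rfl)

theorem sum_filter_mem_shiftMass_of_ne {i : ι} (hik : i ≠ k) :
    ∑ S with i ∈ S, shiftMass k f a b S + ∑ S with k ∉ S ∧ i ∈ S, b S =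
      ∑ S with i ∈ S, f S + ∑ S with k ∉ S ∧ i ∈ S, a S :=
  sum_filter_shiftMass_add k a hb (i ∈ ·) fun _ _ => by simp [mem_insert, hik]

end shiftMass

theorem claim5_coefficient_identities_general
    {K : ℕ} (c : Fin K → Finset (Fin K) → ℕ)
    (d e : Fin K → ℕ)
    (hd : ∀ i, d i = ∑ S : Finset (Fin K), c i S)
    (he : ∀ i, e i = ∑ k : Fin K,
      ∑ S ∈ Finset.univ.filter (fun S : Finset (Fin K) => i ∈ S), c k S)
    (m : Fin K) (hde : ∀ i, e i ≤ d i)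
    (α β : Fin K → Finset (Fin K) → ℕ)
    (hαle : ∀ i S, α i S ≤ c i S) (hβle : ∀ i S, β i S ≤ c i S)
    (hα0 : ∀ i S, ¬(i = m ∧ m ∉ S) → α i S = 0)
    (hαsum : ∑ S : Finset (Fin K), α m S = d m - e m)
    (hβsum : ∀ m', m' ≠ m →
      ∑ S ∈ Finset.univ.filter (fun S : Finset (Fin K) => m' ∉ S), β m' S =
      ∑ S ∈ Finset.univ.filter (fun S : Finset (Fin K) => m ∉ S ∧ m' ∈ S), α m S)
    (chat : Fin K → Finset (Fin K) → ℕ)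
    (hchat : ∀ i S, chat i S =
      if i = m then (if m ∈ S then c i S else c i S - α m S)
      else (if i ∈ S then c i S + β i (S.erase i) else c i S - β i S))
    (dhat ehat : Fin K → ℕ)
    (hdhat : ∀ i, dhat i = ∑ S : Finset (Fin K), chat i S)
    (hehat : ∀ i, ehat i = ∑ k : Fin K,
      ∑ S ∈ Finset.univ.filter (fun S : Finset (Fin K) => i ∈ S), chat k S) :
    dhat m = e m ∧ ehat m = e m ∧
      (∀ m', m' ≠ m → dhat m' = d m' ∧ ehat m' = e m') := by
  have chat_m : chat m = shiftMass m (c m) 0 (α m) := by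
    ext S; simp [hchat, shiftMass]
  have chat_ne {i} (hi : i ≠ m) : chat i = shiftMass i (c i) (β i) (β i) := by
    ext S; simp [hchat, shiftMass, hi]
  have hαsum' : ∑ S with m ∉ S, α m S = d m - e m := by
    rw [← hαsum, sum_filter_of_ne fun S _ h => by_contra fun hS => h (hα0 m S (by tauto))]
  have inner_ne {i k} (hk : k ≠ m) (hik : i ≠ k) :
      ∑ S with i ∈ S, chat k S = ∑ S with i ∈ S, c k S := by
    have h := sum_filter_mem_shiftMass_of_ne k (β k) (hβle k) hik
    rwa [← chat_ne hk, add_left_inj] at h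
  refine ⟨?_, ?_, fun m' hm' => ⟨?_, ?_⟩⟩
  · have h := sum_shiftMass_add m 0 (hαle m)
    rw [← chat_m, ← hdhat, ← hd, hαsum'] at h
    simp only [Pi.zero_apply, sum_const_zero] at h
    have := hde m
    omega
  · rw [hehat, he]
    refine sum_congr rfl fun k _ => ?_
    obtain rfl | hk := eq_or_ne k m
    · simpa [← chat_m] using sum_filter_mem_shiftMass k (c k) 0 (α k)
    · exact inner_ne hk hk.symm
  · have h := sum_shiftMass_add m' (β m') (hβle m')
    rwa [← chat_ne hm', ← hdhat, ← hd, add_left_inj] at h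
  · set X := ∑ S with m ∉ S ∧ m' ∈ S, α m S
    have column (k : Fin K) : ∑ S with m' ∈ S, chat k S + (if k = m then X else 0) =
        ∑ S with m' ∈ S, c k S + (if k = m' then X else 0) := by
      obtain rfl | hkm := eq_or_ne k m
      · simpa [← chat_m, hm'.symm] using
          sum_filter_mem_shiftMass_of_ne k 0 (hαle k) hm'
      obtain rfl | hkm' := eq_or_ne k m'
      · simpa [← chat_ne hkm, hkm, hβsum k hkm] using sum_filter_mem_shiftMass k (c k) (β k) (β k)
      · simp [hkm, hkm', inner_ne hkm (Ne.symm hkm')]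
    have h := sum_congr rfl fun k (_ : k ∈ univ) => column k
    simp only [sum_add_distrib, sum_ite_eq', mem_univ, if_true] at h
    rwa [← hehat, ← he, add_left_inj] at h

/-- Claim 5, coefficient identities for Step 2. -/
theorem claim5_coefficient_identities
    {K : ℕ} (hK : 2 ≤ K) (c : Fin K → Finset (Fin K) → ℕ)
    (d e : Fin K → ℕ)
    (hd : ∀ i, d i = ∑ S : Finset (Fin K), c i S)
    (he : ∀ i, e i = ∑ k : Fin K,
      ∑ S ∈ Finset.univ.filter (fun S : Finset (Fin K) => i ∈ S), c k S)
    (m : Fin K) (hde : ∀ i, e i ≤ d i)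
    (α β : Fin K → Finset (Fin K) → ℕ)
    (hαle : ∀ i S, α i S ≤ c i S) (hβle : ∀ i S, β i S ≤ c i S)
    (hα0 : ∀ i S, ¬(i = m ∧ m ∉ S) → α i S = 0)
    (hαsum : ∑ S : Finset (Fin K), α m S = d m - e m)
    (hβ0 : ∀ i S, ¬(i ≠ m ∧ i ∉ S) → β i S = 0)
    (hβsum : ∀ m', m' ≠ m →
      ∑ S ∈ Finset.univ.filter (fun S : Finset (Fin K) => m' ∉ S), β m' S =
      ∑ S ∈ Finset.univ.filter (fun S : Finset (Fin K) => m ∉ S ∧ m' ∈ S), α m S)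
    (chat : Fin K → Finset (Fin K) → ℕ)
    (hchat : ∀ i S, chat i S =
      if i = m then (if m ∈ S then c i S else c i S - α m S)
      else (if i ∈ S then c i S + β i (S.erase i) else c i S - β i S))
    (dhat ehat : Fin K → ℕ)
    (hdhat : ∀ i, dhat i = ∑ S : Finset (Fin K), chat i S)
    (hehat : ∀ i, ehat i = ∑ k : Fin K,
      ∑ S ∈ Finset.univ.filter (fun S : Finset (Fin K) => i ∈ S), chat k S) :
    dhat m = e m ∧ ehat m = e m ∧
      (∀ m', m' ≠ m → dhat m' = d m' ∧ ehat m' = e m') :=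
  claim5_coefficient_identities_general c d e hd he m hde α β hαle hβle hα0 hαsum hβsum chat hchat
    dhat ehat hdhat hehat
end
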